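/- arXiv:1812.05066 — 2 statements merged into one kernel-verified Lean document; each statement's English description precedes it below -/
import Mathlib

section
/- If m, m' ∈ [0,1]^N have their coordinates arranged in non-decreasing order, then the d₁ distance between the associated empirical measures equals the normalized ℓ¹ distance: d₁(μ_m, μ_{m'}) = (1/N) Σ_{i=1}^N |m_i − m'_i|. -/
open MeasureTheory
open scoped ENNReal

private lemma measure_eval_aux (N : ℕ) (m : Fin N → ℝ)
    (hm : ∀ i, m i ∈ Set.Icc (0:ℝ) 1) (x : ℝ) :
    ((((N : ℝ≥0∞)⁻¹ • ∑ i, Measure.dirac (m i)) (Set.Icc 0 x)).toReal)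
      = (1 / N : ℝ) * ∑ i : Fin N, (if m i ≤ x then (1:ℝ) else 0) := by
  rw [Measure.smul_apply, Measure.finset_sum_apply, smul_eq_mul, ENNReal.toReal_mul]
  congr 1
  · simp
  · rw [ENNReal.toReal_sum]
    · refine Finset.sum_congr rfl fun i _ => ?_
      rw [Measure.dirac_apply' _ measurableSet_Icc, Set.indicator_apply]
      by_cases h : m i ≤ x
      · simp [Set.mem_Icc, h, (hm i).1]
      · simp [Set.mem_Icc, h]
    · intro i _
      rw [Measure.dirac_apply' _ measurableSet_Icc, Set.indicator_apply]
      split <;> simp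

private lemma abs_sum_aux (N : ℕ) (a b : Fin N → ℝ) (h : ∀ i, a i ≤ b i) :
    |∑ i, a i - ∑ i, b i| = ∑ i, |a i - b i| := by
  rw [abs_sub_comm, abs_of_nonneg (sub_nonneg.2 (Finset.sum_le_sum fun i _ => h i)),
    ← Finset.sum_sub_distrib]
  refine Finset.sum_congr rfl fun i _ => ?_
  rw [abs_sub_comm, abs_of_nonneg (sub_nonneg.2 (h i))]

private lemma key_aux (a b : ℝ) : ∀ x, |(if a ≤ x then (1:ℝ) else 0) - (if b ≤ x then (1:ℝ) else 0)|
      = (Set.Ico (min a b) (max a b)).indicator (fun _ => (1:ℝ)) x := by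
  intro x
  rw [Set.indicator_apply]
  by_cases h1 : a ≤ x <;> by_cases h2 : b ≤ x
  · rw [if_pos h1, if_pos h2,
      if_neg (fun hc => absurd (Set.mem_Ico.1 hc).2 (not_lt.2 (max_le h1 h2)))]
    norm_num
  · rw [if_pos h1, if_neg h2,
      if_pos (Set.mem_Ico.2 ⟨le_trans (min_le_left a b) h1,
        lt_of_lt_of_le (not_le.1 h2) (le_max_right a b)⟩)]
    norm_num
  · rw [if_neg h1, if_pos h2,
      if_pos (Set.mem_Ico.2 ⟨le_trans (min_le_right a b) h2,
        lt_of_lt_of_le (not_le.1 h1) (le_max_left a b)⟩)]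
    norm_num
  · rw [if_neg h1, if_neg h2,
      if_neg (fun hc => absurd (Set.mem_Ico.1 hc).1
        (not_le.2 (lt_min (not_le.1 h1) (not_le.1 h2))))]
    norm_num

private lemma integral_aux (a b : ℝ) (ha : a ∈ Set.Icc (0:ℝ) 1) (hb : b ∈ Set.Icc (0:ℝ) 1) :
    (∫ x in Set.Icc (0:ℝ) 1, |(if a ≤ x then (1:ℝ) else 0) - (if b ≤ x then (1:ℝ) else 0)|)
      = |a - b| := by
  simp_rw [key_aux a b]
  rw [setIntegral_indicator measurableSet_Ico]
  have hsub : Set.Icc (0:ℝ) 1 ∩ Set.Ico (min a b) (max a b) = Set.Ico (min a b) (max a b) := by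
    apply Set.inter_eq_self_of_subset_right
    intro y hy
    exact ⟨le_trans (le_min ha.1 hb.1) hy.1, le_of_lt (lt_of_lt_of_le hy.2 (max_le ha.2 hb.2))⟩
  rw [hsub, setIntegral_const, measureReal_def, Real.volume_Ico, smul_eq_mul, mul_one,
    ENNReal.toReal_ofReal (by simp [sub_nonneg, min_le_max]), max_sub_min_eq_abs, abs_sub_comm]

private lemma integrable_aux (a b : ℝ) :
    IntegrableOn (fun x => |(if a ≤ x then (1:ℝ) else 0) - (if b ≤ x then (1:ℝ) else 0)|)
      (Set.Icc (0:ℝ) 1) volume := by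
  simp_rw [key_aux a b]
  have h : Integrable ((Set.Ico (min a b) (max a b)).indicator (fun _ => (1:ℝ))) volume := by
    rw [integrable_indicator_iff measurableSet_Ico]
    exact integrableOn_const measure_Ico_lt_top.ne
  exact h.integrableOn

theorem stmt1 (N : ℕ) (hN : 0 < N) (m m' : Fin N → ℝ)
    (hm : ∀ i, m i ∈ Set.Icc (0:ℝ) 1) (hm' : ∀ i, m' i ∈ Set.Icc (0:ℝ) 1)
    (hmono : Monotone m) (hmono' : Monotone m') :
    (∫ x in Set.Icc (0:ℝ) 1,
      |((((N : ℝ≥0∞)⁻¹ • ∑ i, Measure.dirac (m i)) (Set.Icc 0 x)).toReal)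
        - ((((N : ℝ≥0∞)⁻¹ • ∑ i, Measure.dirac (m' i)) (Set.Icc 0 x)).toReal)|)
      = (1 / N : ℝ) * ∑ i, |m i - m' i| := by
  have step1 : ∀ x : ℝ,
      |((((N : ℝ≥0∞)⁻¹ • ∑ i, Measure.dirac (m i)) (Set.Icc 0 x)).toReal)
        - ((((N : ℝ≥0∞)⁻¹ • ∑ i, Measure.dirac (m' i)) (Set.Icc 0 x)).toReal)|
      = (1 / N : ℝ) * ∑ i : Fin N,
          |(if m i ≤ x then (1:ℝ) else 0) - (if m' i ≤ x then (1:ℝ) else 0)| := by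
    intro x
    rw [measure_eval_aux N m hm x, measure_eval_aux N m' hm' x, ← mul_sub, abs_mul,
      abs_of_nonneg (by positivity : (0:ℝ) ≤ 1 / N)]
    congr 1
    have hcomp : (∀ i, m i ≤ x → m' i ≤ x) ∨ (∀ i, m' i ≤ x → m i ≤ x) := by
      by_contra h
      push_neg at h
      obtain ⟨⟨i, hi1, hi2⟩, ⟨j, hj1, hj2⟩⟩ := h
      rcases le_total i j with hij | hij
      · exact absurd (le_trans (hmono' hij) hj1) (not_le.2 hi2)
      · exact absurd (le_trans (hmono hij) hi1) (not_le.2 hj2)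
    rcases hcomp with h | h
    · exact abs_sum_aux N _ _ fun i => by
        by_cases hi : m i ≤ x <;> simp [hi, h i]
        · split <;> norm_num
    · rw [abs_sub_comm]
      rw [abs_sum_aux N _ _ fun i => ?_]
      · exact Finset.sum_congr rfl fun i _ => abs_sub_comm _ _
      · by_cases hi : m' i ≤ x <;> simp [hi, h i]
        · split <;> norm_num
  rw [setIntegral_congr_fun measurableSet_Icc (fun x _ => step1 x)]
  rw [integral_const_mul, integral_finset_sum _ (fun i _ => integrable_aux (m i) (m' i))]
  congr 1
  exact Finset.sum_congr rfl fun i _ => integral_aux (m i) (m' i) (hm i) (hm' i)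
end

section
/- Let v : [0,1] → ℝ be continuous. For any m, m' ∈ [0,1]^N, (1/N) Σ_{i=1}^N |v(m_i) − v(m'_i)| ≤ inf_{t>0} ( max_{|a−b|≤t} |v(a)−v(b)| + 2‖v‖_∞ · d₁(μ_m, μ_{m'})/t ), where d₁(μ_m,μ_{m'}) is the L¹ distance of the empirical c.d.f.'s. -/
theorem stmt2 (N : ℕ) (hN : 0 < N) (v : ℝ → ℝ)
    (hv : ContinuousOn v (Set.Icc 0 1))
    (m m' : Fin N → ℝ)
    (hm : ∀ i, m i ∈ Set.Icc (0:ℝ) 1) (hm' : ∀ i, m' i ∈ Set.Icc (0:ℝ) 1) :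
    (1 / N : ℝ) * ∑ i, |v (m i) - v (m' i)| ≤
      ⨅ t : {t : ℝ // 0 < t},
        (sSup {d : ℝ | ∃ a ∈ Set.Icc (0:ℝ) 1, ∃ b ∈ Set.Icc (0:ℝ) 1,
            |a - b| ≤ t.1 ∧ d = |v a - v b|}
          + 2 * sSup {d : ℝ | ∃ a ∈ Set.Icc (0:ℝ) 1, d = |v a|}
            * ((1 / N : ℝ) * ∑ i, |m i - m' i|) / t.1) := by
  obtain ⟨C, hC⟩ := (isCompact_Icc (a := (0:ℝ)) (b := 1)).exists_bound_of_continuousOn hv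
  simp only [Real.norm_eq_abs] at hC
  set S2 : Set ℝ := {d : ℝ | ∃ a ∈ Set.Icc (0:ℝ) 1, d = |v a|} with hS2
  have h01 : (0:ℝ) ∈ Set.Icc (0:ℝ) 1 := by constructor <;> norm_num
  have hS2bdd : BddAbove S2 := ⟨C, by rintro d ⟨a, ha, rfl⟩; exact hC a ha⟩
  set M := sSup S2 with hMdef
  have hM : ∀ a ∈ Set.Icc (0:ℝ) 1, |v a| ≤ M := fun a ha =>
    le_csSup hS2bdd ⟨a, ha, rfl⟩
  have hM0 : 0 ≤ M := le_trans (abs_nonneg _) (hM 0 h01)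
  refine le_ciInf fun t => ?_
  obtain ⟨t, ht⟩ := t
  simp only
  set S1 : Set ℝ := {d : ℝ | ∃ a ∈ Set.Icc (0:ℝ) 1, ∃ b ∈ Set.Icc (0:ℝ) 1,
      |a - b| ≤ t ∧ d = |v a - v b|} with hS1
  have hS1bdd : BddAbove S1 := by
    refine ⟨2 * C, ?_⟩
    rintro d ⟨a, ha, b, hb, _, rfl⟩
    calc |v a - v b| ≤ |v a| + |v b| := abs_sub _ _
      _ ≤ C + C := add_le_add (hC a ha) (hC b hb)
      _ = 2 * C := by ring
  set ω := sSup S1 with hωdef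
  have hω : ∀ a ∈ Set.Icc (0:ℝ) 1, ∀ b ∈ Set.Icc (0:ℝ) 1, |a - b| ≤ t →
      |v a - v b| ≤ ω := fun a ha b hb hab => le_csSup hS1bdd ⟨a, ha, b, hb, hab, rfl⟩
  have hω0 : 0 ≤ ω := by
    have := hω 0 h01 0 h01 (by simpa using le_of_lt ht)
    simpa using this
  have hterm : ∀ i, |v (m i) - v (m' i)| ≤ ω + 2 * M * |m i - m' i| / t := by
    intro i
    by_cases h : |m i - m' i| ≤ t
    · have h1 := hω _ (hm i) _ (hm' i) h
      have h2 : 0 ≤ 2 * M * |m i - m' i| / t := by positivity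
      linarith
    · push_neg at h
      have h1 : |v (m i) - v (m' i)| ≤ 2 * M := by
        calc |v (m i) - v (m' i)| ≤ |v (m i)| + |v (m' i)| := abs_sub _ _
          _ ≤ M + M := add_le_add (hM _ (hm i)) (hM _ (hm' i))
          _ = 2 * M := by ring
      have h2 : 2 * M ≤ 2 * M * |m i - m' i| / t := by
        rw [le_div_iff₀ ht]
        nlinarith
      linarith
  have hsum : ∑ i, |v (m i) - v (m' i)| ≤ ∑ i, (ω + 2 * M * |m i - m' i| / t) :=
    Finset.sum_le_sum fun i _ => hterm i
  have hNpos : (0:ℝ) < N := by exact_mod_cast hN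
  calc (1 / N : ℝ) * ∑ i, |v (m i) - v (m' i)|
      ≤ (1 / N : ℝ) * ∑ i, (ω + 2 * M * |m i - m' i| / t) := by
        exact mul_le_mul_of_nonneg_left hsum (by positivity)
    _ = ω + 2 * M * ((1 / N : ℝ) * ∑ i, |m i - m' i|) / t := by
        rw [Finset.sum_add_distrib, Finset.sum_const, Finset.card_univ, Fintype.card_fin,
          ← Finset.sum_div, ← Finset.mul_sum]
        field_simp
        ring
end
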